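/- Let A and B be bounded linear operators on a complex Hilbert space H, and let T be the operator on H ⊕ H given by the 2×2 operator matrix with zero diagonal entries, (1,2)-entry A, and (2,1)-entry B*. Then ‖A + B‖ ≤ 2 w(T) ≤ ‖A‖ + ‖B‖, where w denotes the numerical radius. -/

import Mathlib

/-!
For `z = (x, y)` one has `⟪T z, z⟫ = ⟪A y, x⟫ + conj ⟪B y, x⟫`. Hence
`‖⟪T z, z⟫‖ ≤ (‖A‖ + ‖B‖) ‖x‖ ‖y‖ ≤ (‖A‖ + ‖B‖) ‖z‖² / 2`, while the real parts give
`re ⟪(A + B) y, x⟫ = re ⟪T z, z⟫ ≤ w(T) ‖z‖² = 2 w(T)` for unit `x, y`; the supremum of the left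
side over unit vectors is `‖A + B‖`.
-/

/-- The numerical radius of a bounded linear operator. -/
noncomputable def numRadius {E : Type*} [NormedAddCommGroup E] [InnerProductSpace ℂ E]
    (T : E →L[ℂ] E) : ℝ :=
  ⨆ x : {x : E // ‖x‖ = 1}, ‖(inner ℂ (T x.val) x.val : ℂ)‖

/-- The 2×2 operator matrix `[[0, C],[D, 0]]` acting on `H ⊕ H` (as `WithLp 2 (H × H)`)
by `(x, y) ↦ (C y, D x)`. -/
noncomputable def offDiagOp {H : Type*} [NormedAddCommGroup H] [InnerProductSpace ℂ H]
    (C D : H →L[ℂ] H) : WithLp 2 (H × H) →L[ℂ] WithLp 2 (H × H) :=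
  ((WithLp.prodContinuousLinearEquiv 2 ℂ H H).symm : (H × H) →L[ℂ] WithLp 2 (H × H)) ∘L
    ((C ∘L ContinuousLinearMap.snd ℂ H H).prod (D ∘L ContinuousLinearMap.fst ℂ H H)) ∘L
    ((WithLp.prodContinuousLinearEquiv 2 ℂ H H) : WithLp 2 (H × H) →L[ℂ] (H × H))

open ContinuousLinearMap RCLike

section NumericalRadius

variable {E : Type*} [NormedAddCommGroup E] [InnerProductSpace ℂ E]

theorem numRadius_nonneg (T : E →L[ℂ] E) : 0 ≤ numRadius T :=
  Real.iSup_nonneg fun _ => norm_nonneg _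

theorem norm_inner_le_numRadius (T : E →L[ℂ] E) {x : E} (hx : ‖x‖ = 1) :
    ‖inner ℂ (T x) x‖ ≤ numRadius T := by
  refine le_ciSup (f := fun x : {x : E // ‖x‖ = 1} => ‖inner ℂ (T x.1) x.1‖) ⟨‖T‖, ?_⟩ ⟨x, hx⟩
  rintro r ⟨⟨x, hx⟩, rfl⟩
  calc ‖inner ℂ (T x) x‖ ≤ ‖T x‖ * ‖x‖ := norm_inner_le_norm _ _
    _ ≤ ‖T‖ * ‖x‖ * ‖x‖ := by gcongr; exact T.le_opNorm x
    _ = ‖T‖ := by rw [hx]; ring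

theorem norm_inner_self_le_numRadius_mul_sq (T : E →L[ℂ] E) (x : E) :
    ‖inner ℂ (T x) x‖ ≤ numRadius T * ‖x‖ ^ 2 := by
  rcases eq_or_ne x 0 with rfl | hx
  · simp
  have hn : 0 < ‖x‖ := norm_pos_iff.mpr hx
  have := norm_inner_le_numRadius T (norm_smul_inv_norm (𝕜 := ℂ) hx)
  rw [map_smul, inner_smul_left, inner_smul_right, norm_mul, norm_mul] at this
  simp only [RCLike.norm_conj, norm_inv, RCLike.norm_ofReal, abs_norm] at this
  rwa [← mul_assoc, ← mul_inv, ← sq, inv_mul_le_iff₀ (by positivity), mul_comm] at this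

end NumericalRadius

section OffDiagonal

variable {H : Type*} [NormedAddCommGroup H] [InnerProductSpace ℂ H]

theorem inner_offDiagOp_self (C D : H →L[ℂ] H) (z : WithLp 2 (H × H)) :
    inner ℂ (offDiagOp C D z) z = inner ℂ (C z.snd) z.fst + inner ℂ (D z.fst) z.snd :=
  WithLp.prod_inner_apply _ _

theorem numRadius_offDiagOp_le (C D : H →L[ℂ] H) :
    numRadius (offDiagOp C D) ≤ (‖C‖ + ‖D‖) / 2 := by
  refine Real.iSup_le (fun ⟨z, hz⟩ => ?_) (by positivity)
  have hz2 : ‖z.fst‖ ^ 2 + ‖z.snd‖ ^ 2 = 1 := by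
    rw [← WithLp.prod_norm_sq_eq_of_L2, hz, one_pow]
  calc ‖inner ℂ (offDiagOp C D z) z‖
      ≤ ‖C z.snd‖ * ‖z.fst‖ + ‖D z.fst‖ * ‖z.snd‖ := by
        rw [inner_offDiagOp_self]
        exact (norm_add_le _ _).trans
          (add_le_add (norm_inner_le_norm _ _) (norm_inner_le_norm _ _))
    _ ≤ ‖C‖ * ‖z.snd‖ * ‖z.fst‖ + ‖D‖ * ‖z.fst‖ * ‖z.snd‖ := by
        gcongr <;> exact le_opNorm _ _
    _ = (‖C‖ + ‖D‖) * (‖z.fst‖ * ‖z.snd‖) := by ring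
    _ ≤ (‖C‖ + ‖D‖) / 2 := by
        nlinarith [sq_nonneg (‖z.fst‖ - ‖z.snd‖), norm_nonneg C, norm_nonneg D]

variable [CompleteSpace H]

theorem re_inner_offDiagOp_adjoint_self (A B : H →L[ℂ] H) (z : WithLp 2 (H × H)) :
    re (inner ℂ (offDiagOp A (adjoint B) z) z) = re (inner ℂ ((A + B) z.snd) z.fst) := by
  rw [inner_offDiagOp_self, adjoint_inner_left, add_apply, inner_add_left, map_add, map_add,
    ← inner_conj_symm z.fst, conj_re]

theorem norm_add_le_two_mul_numRadius_offDiagOp (A B : H →L[ℂ] H) :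
    ‖A + B‖ ≤ 2 * numRadius (offDiagOp A (adjoint B)) := by
  refine opNorm_le_of_re_inner_le (by linarith [numRadius_nonneg (offDiagOp A (adjoint B))])
    fun x y hx hy => ?_
  set z : WithLp 2 (H × H) := WithLp.toLp 2 (y, x)
  have hz : ‖z‖ ^ 2 = 2 := by
    rw [WithLp.prod_norm_sq_eq_of_L2, WithLp.toLp_fst, WithLp.toLp_snd, hx, hy]; norm_num
  calc re (inner ℂ ((A + B) x) y)
      = re (inner ℂ (offDiagOp A (adjoint B) z) z) := (re_inner_offDiagOp_adjoint_self A B z).symm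
    _ ≤ ‖inner ℂ (offDiagOp A (adjoint B) z) z‖ := re_le_norm _
    _ ≤ 2 * numRadius (offDiagOp A (adjoint B)) := by
        rw [mul_comm, ← hz]; exact norm_inner_self_le_numRadius_mul_sq _ _

end OffDiagonal

theorem stmt_7 {H : Type*} [NormedAddCommGroup H] [InnerProductSpace ℂ H] [CompleteSpace H]
    (A B : H →L[ℂ] H) (T : WithLp 2 (H × H) →L[ℂ] WithLp 2 (H × H))
    (hT : T = offDiagOp A (ContinuousLinearMap.adjoint B)) :
    ‖A + B‖ ≤ 2 * numRadius T ∧ 2 * numRadius T ≤ ‖A‖ + ‖B‖ := by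
  subst hT
  refine ⟨norm_add_le_two_mul_numRadius_offDiagOp A B, ?_⟩
  have := numRadius_offDiagOp_le A (adjoint B)
  rw [LinearIsometryEquiv.norm_map] at this
  linarith
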